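/- arXiv:2212.02727 — 4 statements merged into one kernel-verified Lean document; each statement's English description precedes it below -/
import Mathlib

section
/- Let Ω be a nonempty convex subset of a normed space X and let x̄ ∈ Ω. Then the contingent (Bouligand) tangent cone to Ω at x̄ is lower semicontinuous along Ω in the sense that T(x̄; Ω) ⊆ s-liminf_{x →_Ω x̄} T(x; Ω): for every v ∈ T(x̄; Ω) and every sequence x_k ∈ Ω with x_k → x̄, there exist v_k ∈ T(x_k; Ω) with v_k → v. -/
/-!
For convex `Ω`, every positive multiple of `y - x` with `y ∈ Ω` is a contingent direction
at `x ∈ Ω`. If `w i → v` with `xb + t i • w i ∈ Ω`, the directions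
`(t i)⁻¹ • (xb + t i • w i - x k) = w i + (t i)⁻¹ • (xb - x k) ∈ T(x k; Ω)`
tend to `w i` as `k → ∞`, and a diagonal choice `i = m k` makes them tend to `v`.
-/

open Filter Topology

/-- The Bouligand contingent cone to `Ω` at `x`. -/
def Contingent {X : Type*} [NormedAddCommGroup X] [NormedSpace ℝ X]
    (Ω : Set X) (x : X) : Set X :=
  {v | ∃ t : ℕ → ℝ, ∃ w : ℕ → X, (∀ k, 0 < t k) ∧ Tendsto t atTop (𝓝 0) ∧
    Tendsto w atTop (𝓝 v) ∧ ∀ k, x + t k • w k ∈ Ω}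

theorem exists_tendsto_diag_of_mem_closure_range {X ι : Type*} [PseudoMetricSpace X]
    {u : ℕ → ι → X} {a : ι → X} (hu : ∀ i, Tendsto (fun k => u k i) atTop (𝓝 (a i)))
    {L : X} (hL : L ∈ closure (Set.range a)) :
    ∃ m : ℕ → ι, Tendsto (fun k => u k (m k)) atTop (𝓝 L) := by
  have : Nonempty ι := ⟨(Metric.mem_closure_range_iff.mp hL 1 one_pos).choose⟩
  set δ : ℕ → ℝ := fun k => ⨅ i, dist (u k i) L
  have hδ_nonneg : ∀ k, 0 ≤ δ k := fun k => le_ciInf fun _ => dist_nonneg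
  have hδ_le : ∀ k i, δ k ≤ dist (u k i) L := fun k =>
    ciInf_le ⟨0, by rintro _ ⟨j, rfl⟩; exact dist_nonneg⟩
  have hδ : Tendsto δ atTop (𝓝 0) := by
    refine Metric.tendsto_atTop.mpr fun ε hε => ?_
    obtain ⟨i, hi⟩ := Metric.mem_closure_range_iff.mp hL (ε / 2) (half_pos hε)
    obtain ⟨N, hN⟩ := Metric.tendsto_atTop.mp (hu i) (ε / 2) (half_pos hε)
    refine ⟨N, fun k hk => ?_⟩
    calc dist (δ k) 0 = δ k := by rw [Real.dist_0_eq_abs, abs_of_nonneg (hδ_nonneg k)]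
      _ ≤ dist (u k i) L := hδ_le k i
      _ ≤ dist (u k i) (a i) + dist L (a i) := dist_triangle_right _ _ _
      _ < ε / 2 + ε / 2 := add_lt_add (hN k hk) hi
      _ = ε := add_halves ε
  have hm : ∀ k, ∃ i, dist (u k i) L < δ k + 1 / (k + 1) := fun k =>
    exists_lt_of_ciInf_lt (lt_add_of_pos_right _ (by positivity))
  choose m hm using hm
  refine ⟨m, tendsto_iff_dist_tendsto_zero.mpr ?_⟩
  refine squeeze_zero (fun _ => dist_nonneg) (fun k => (hm k).le) ?_
  simpa using hδ.add tendsto_one_div_add_atTop_nhds_zero_nat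

section Contingent

variable {X : Type*} [NormedAddCommGroup X] [NormedSpace ℝ X] {Ω : Set X} {x v : X}

theorem smul_mem_contingent (hv : v ∈ Contingent Ω x) {c : ℝ} (hc : 0 < c) :
    c • v ∈ Contingent Ω x := by
  obtain ⟨t, w, ht_pos, ht, hw, hmem⟩ := hv
  refine ⟨fun k => t k / c, fun k => c • w k, fun k => div_pos (ht_pos k) hc, ?_,
    hw.const_smul c, fun k => ?_⟩
  · simpa using ht.div_const c
  · simpa [smul_smul, div_mul_cancel₀ _ hc.ne'] using hmem k

theorem sub_mem_contingent_of_convex (hΩ : Convex ℝ Ω) (hx : x ∈ Ω) {y : X} (hy : y ∈ Ω) :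
    y - x ∈ Contingent Ω x := by
  refine ⟨fun k => 1 / (k + 1), fun _ => y - x, fun k => by positivity,
    tendsto_one_div_add_atTop_nhds_zero_nat, tendsto_const_nhds, fun k => ?_⟩
  refine hΩ.add_smul_sub_mem hx hy ⟨by positivity, ?_⟩
  rw [div_le_one (by positivity)]
  linarith [k.cast_nonneg (α := ℝ)]

end Contingent

theorem contingent_cone_liminf_general {X : Type*} [NormedAddCommGroup X] [NormedSpace ℝ X]
    {Ω : Set X} (hconv : Convex ℝ Ω) {xb : X}
    {v : X} (hv : v ∈ Contingent Ω xb) (x : ℕ → X) (hx : ∀ k, x k ∈ Ω)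
    (hlim : Tendsto x atTop (𝓝 xb)) :
    ∃ vk : ℕ → X, (∀ k, vk k ∈ Contingent Ω (x k)) ∧ Tendsto vk atTop (𝓝 v) := by
  obtain ⟨t, w, ht_pos, -, hw, hmem⟩ := hv
  set u : ℕ → ℕ → X := fun k i => (t i)⁻¹ • (xb + t i • w i - x k)
  have hu_eq : ∀ k i, u k i = w i + (t i)⁻¹ • (xb - x k) := fun k i => by
    simp only [u, smul_sub, smul_add, inv_smul_smul₀ (ht_pos i).ne']
    abel
  have hu : ∀ i, Tendsto (fun k => u k i) atTop (𝓝 (w i)) := fun i => by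
    simpa [hu_eq] using
      ((tendsto_sub_nhds_zero_iff.mpr hlim).neg.const_smul (t i)⁻¹).const_add (w i)
  obtain ⟨m, hm⟩ := exists_tendsto_diag_of_mem_closure_range hu
    (mem_closure_of_tendsto hw (Eventually.of_forall fun i => Set.mem_range_self i))
  exact ⟨fun k => u k (m k), fun k => smul_mem_contingent
    (sub_mem_contingent_of_convex hconv (hx k) (hmem (m k))) (inv_pos.mpr (ht_pos (m k))), hm⟩

/-- For a nonempty convex set `Ω`, the contingent cone is lower semicontinuous along `Ω`:
`T(xb;Ω) ⊆ s-liminf_{x →_Ω xb} T(x;Ω)`. -/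
theorem contingent_cone_liminf {X : Type*} [NormedAddCommGroup X] [NormedSpace ℝ X]
    {Ω : Set X} (hconv : Convex ℝ Ω) (hne : Ω.Nonempty) {xb : X} (hxb : xb ∈ Ω)
    {v : X} (hv : v ∈ Contingent Ω xb) (x : ℕ → X) (hx : ∀ k, x k ∈ Ω)
    (hlim : Tendsto x atTop (𝓝 xb)) :
    ∃ vk : ℕ → X, (∀ k, vk k ∈ Contingent Ω (x k)) ∧ Tendsto vk atTop (𝓝 v) :=
  contingent_cone_liminf_general hconv hv x hx hlim
end

section
/- Let X be a Hilbert space, Ω ⊆ X a closed convex set, x̄ ∈ Ω, and v ∈ T(x̄; Ω) (the contingent cone). Then for every ε > 0 there exists δ > 0 such that for all x ∈ Ω with ‖x − x̄‖ ≤ δ one has dist(v, T(x; Ω)) ≤ ε (i.e., v ∈ T(x; Ω) + ε B_X). -/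
open Filter Topology

/-!
Pick a contingent approximation `xb + t • w ∈ Ω` with `w` close to `v`. For `x ∈ Ω` near `xb`,
the same point is `x + t • u` with `u = w + t⁻¹ • (xb - x)`, so by convexity `u` is a feasible,
hence contingent, direction at `x`; and `‖v - u‖ ≤ ‖v - w‖ + t⁻¹ ‖xb - x‖` is small once
`‖xb - x‖` is small compared with `t`.
-/

section Contingent

variable {X : Type*} [NormedAddCommGroup X] [NormedSpace ℝ X] {Ω : Set X}

theorem exists_add_smul_mem_of_mem_contingent {xb v : X} (hv : v ∈ Contingent Ω xb) {η : ℝ}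
    (hη : 0 < η) : ∃ t > (0 : ℝ), ∃ w, ‖v - w‖ < η ∧ xb + t • w ∈ Ω := by
  obtain ⟨t, w, ht, -, hw, hmem⟩ := hv
  obtain ⟨k, hk⟩ := Metric.tendsto_atTop.mp hw η hη
  exact ⟨t k, ht k, w k, by simpa only [dist_eq_norm, norm_sub_rev] using hk k le_rfl, hmem k⟩

theorem Convex.mem_contingent_of_add_smul_mem (hΩ : Convex ℝ Ω) {x u : X} (hx : x ∈ Ω)
    {t : ℝ} (ht : 0 < t) (hmem : x + t • u ∈ Ω) : u ∈ Contingent Ω x := by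
  refine ⟨fun j ↦ 1 / ((j : ℝ) + 1) * t, fun _ ↦ u, fun j ↦ by positivity, ?_,
    tendsto_const_nhds, fun j ↦ ?_⟩
  · simpa only [zero_mul] using tendsto_one_div_add_atTop_nhds_zero_nat.mul_const t
  · rw [mul_smul]
    refine hΩ.add_smul_mem hx hmem ⟨by positivity, ?_⟩
    exact div_le_one_of_le₀ (by linarith [(j.cast_nonneg : (0 : ℝ) ≤ j)]) (by positivity)

end Contingent

theorem contingent_cone_stability_general {X : Type*} [NormedAddCommGroup X] [InnerProductSpace ℝ X]
    {Ω : Set X} (hconv : Convex ℝ Ω)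
    {xb : X} {v : X} (hv : v ∈ Contingent Ω xb) :
    ∀ ε > (0 : ℝ), ∃ δ > (0 : ℝ), ∀ x ∈ Ω, ‖x - xb‖ ≤ δ →
      ∃ w ∈ Contingent Ω x, ‖v - w‖ ≤ ε := by
  intro ε hε
  obtain ⟨t, ht, w, hvw, hmem⟩ := exists_add_smul_mem_of_mem_contingent hv (half_pos hε)
  refine ⟨t * (ε / 2), by positivity, fun x hx hxδ ↦ ⟨w + t⁻¹ • (xb - x), ?_, ?_⟩⟩
  · refine hconv.mem_contingent_of_add_smul_mem hx ht ?_
    rwa [smul_add, smul_inv_smul₀ ht.ne', add_left_comm, add_sub_cancel, add_comm]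
  · have hshift : ‖t⁻¹ • (xb - x)‖ ≤ ε / 2 := by
      rw [norm_smul, norm_inv, Real.norm_of_nonneg ht.le, norm_sub_rev, inv_mul_le_iff₀ ht]
      exact hxδ
    calc ‖v - (w + t⁻¹ • (xb - x))‖ = ‖(v - w) - t⁻¹ • (xb - x)‖ := by rw [sub_add_eq_sub_sub]
      _ ≤ ‖v - w‖ + ‖t⁻¹ • (xb - x)‖ := norm_sub_le _ _
      _ ≤ ε := by linarith

/-- Hilbert-space stability of contingent directions for closed convex sets: if
`v ∈ T(xb;Ω)` then for every `ε > 0` there is `δ > 0` such that `v ∈ T(x;Ω) + ε B_X`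
for all `x ∈ Ω` with `‖x − xb‖ ≤ δ`. -/
theorem contingent_cone_stability {X : Type*} [NormedAddCommGroup X] [InnerProductSpace ℝ X]
    [CompleteSpace X] {Ω : Set X} (hcl : IsClosed Ω) (hconv : Convex ℝ Ω)
    {xb : X} (hxb : xb ∈ Ω) {v : X} (hv : v ∈ Contingent Ω xb) :
    ∀ ε > (0 : ℝ), ∃ δ > (0 : ℝ), ∀ x ∈ Ω, ‖x - xb‖ ≤ δ →
      ∃ w ∈ Contingent Ω x, ‖v - w‖ ≤ ε :=
  contingent_cone_stability_general hconv hv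
end

section
/- Let f : X → Y be strictly differentiable at x̄ with derivative ∇f(x̄), let Ω ⊆ X be closed, (x̄, f(x̄)) ∈ gph f|_Ω, ε ≥ 0, and c := ‖∇f(x̄)‖ + 1. Then for every γ > 0 there exists δ > 0 (independent of ε) such that for every (x, y) ∈ gph f|_Ω with ‖x − x̄‖ ≤ δ and ‖y − f(x̄)‖ ≤ δ, the implication holds: if (x*, −y*) ∈ N̂_ε((x, y); gph f|_Ω), then x* − ∇f(x̄)* y* ∈ N̂_{(c+γ)ε + ‖y*‖γ}(x; Ω). -/
open Filter Topology NormedSpace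

/-- `ε`-normals on a single space. -/
def IsEpsNormal {X : Type*} [NormedAddCommGroup X] [NormedSpace ℝ X]
    (Ω : Set X) (xb : X) (ε : ℝ) (f : StrongDual ℝ X) : Prop :=
  ∀ γ > (0 : ℝ), ∃ δ > (0 : ℝ), ∀ x ∈ Ω, ‖x - xb‖ < δ →
    f (x - xb) ≤ (ε + γ) * ‖x - xb‖

/-- `ε`-normals to a subset of `X × Y` w.r.t. the sum norm; the functional is the pair
`(f, g) : (u, v) ↦ f u + g v`. -/
def IsEpsNormalProd {X Y : Type*} [NormedAddCommGroup X] [NormedSpace ℝ X]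
    [NormedAddCommGroup Y] [NormedSpace ℝ Y]
    (C : Set (X × Y)) (p : X × Y) (ε : ℝ) (f : StrongDual ℝ X) (g : StrongDual ℝ Y) : Prop :=
  ∀ γ > (0 : ℝ), ∃ δ > (0 : ℝ), ∀ q ∈ C, ‖q.1 - p.1‖ + ‖q.2 - p.2‖ < δ →
    f (q.1 - p.1) + g (q.2 - p.2) ≤ (ε + γ) * (‖q.1 - p.1‖ + ‖q.2 - p.2‖)

/-!
Near `x̄` the map `f` is `γ`-close to its derivative `A` on a whole ball, so for `u, x` in that
ball, `‖u - x‖ + ‖f u - f x‖ ≤ (‖A‖ + 1 + γ) ‖u - x‖`. Testing the normal `(x*, -y*)` against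
the graph point `(u, f u)` therefore costs the factor `‖A‖ + 1 + γ` on `ε`, and replacing
`f u - f x` by `A (u - x)` in `y*` costs `‖y*‖ γ ‖u - x‖`.
-/

open scoped NNReal

section

variable {X Y : Type*} [NormedAddCommGroup X] [NormedSpace ℝ X]
  [NormedAddCommGroup Y] [NormedSpace ℝ Y]

theorem StrongDual.apply_le_opNorm_mul (φ : StrongDual ℝ X) (v : X) : φ v ≤ ‖φ‖ * ‖v‖ :=
  (le_abs_self _).trans (φ.le_opNorm v)

namespace ApproximatesLinearOn

variable {f : X → Y} {A : X →L[ℝ] Y} {s : Set X} {c : ℝ≥0} {u x : X}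

theorem norm_sub_le (hf : ApproximatesLinearOn f A s c) (hu : u ∈ s) (hx : x ∈ s) :
    ‖f u - f x‖ ≤ (‖A‖ + c) * ‖u - x‖ := by
  simpa [Subtype.dist_eq, dist_eq_norm] using hf.lipschitz.dist_le_mul ⟨u, hu⟩ ⟨x, hx⟩

theorem norm_sub_add_norm_sub_le (hf : ApproximatesLinearOn f A s c) (hu : u ∈ s)
    (hx : x ∈ s) : ‖u - x‖ + ‖f u - f x‖ ≤ (‖A‖ + 1 + c) * ‖u - x‖ := by
  linarith [hf.norm_sub_le hu hx]

end ApproximatesLinearOn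

theorem IsEpsNormalProd.isEpsNormal_sub_comp {f : X → Y} {A : X →L[ℝ] Y} {Ω s : Set X}
    {c : ℝ≥0} {x : X} {ε : ℝ} {xstar : StrongDual ℝ X} {ystar : StrongDual ℝ Y}
    (hε : 0 ≤ ε) (hs : s ∈ 𝓝 x) (hf : ApproximatesLinearOn f A s c)
    (hN : IsEpsNormalProd {p : X × Y | p.1 ∈ Ω ∧ p.2 = f p.1} (x, f x) ε xstar (-ystar)) :
    IsEpsNormal Ω x ((‖A‖ + 1 + c) * ε + ‖ystar‖ * c) (xstar - ystar.comp A) := by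
  intro γ hγ
  set K : ℝ := ‖A‖ + 1 + c
  have hK : 0 < K := by positivity
  obtain ⟨δ, hδ, hgraph⟩ := hN (γ / K) (by positivity)
  obtain ⟨r, hr, hball⟩ := Metric.mem_nhds_iff.1 hs
  refine ⟨min r (δ / K), lt_min hr (by positivity), fun u hu hux => ?_⟩
  have hus : u ∈ s := hball (by simpa [dist_eq_norm] using hux.trans_le (min_le_left _ _))
  have hxs : x ∈ s := mem_of_mem_nhds hs
  have hsum := hf.norm_sub_add_norm_sub_le hus hxs
  have hδu : ‖u - x‖ + ‖f u - f x‖ < δ :=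
    calc _ ≤ K * ‖u - x‖ := hsum
      _ < K * (δ / K) := mul_lt_mul_of_pos_left (hux.trans_le (min_le_right _ _)) hK
      _ = δ := mul_div_cancel₀ δ hK.ne'
  have hnormal : xstar (u - x) + (-ystar) (f u - f x) ≤ (ε + γ / K) * (K * ‖u - x‖) :=
    (hgraph (u, f u) ⟨hu, rfl⟩ hδu).trans (mul_le_mul_of_nonneg_left hsum (by positivity))
  have hlin : ystar (f u - f x - A (u - x)) ≤ ‖ystar‖ * (c * ‖u - x‖) :=
    (ystar.apply_le_opNorm_mul _).trans (mul_le_mul_of_nonneg_left (hf u hus x hxs) (norm_nonneg _))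
  have hsplit : (xstar - ystar.comp A) (u - x)
      = xstar (u - x) + (-ystar) (f u - f x) + ystar (f u - f x - A (u - x)) := by
    simp only [sub_apply, ContinuousLinearMap.comp_apply, neg_apply, map_sub]
    ring
  calc (xstar - ystar.comp A) (u - x)
      ≤ (ε + γ / K) * (K * ‖u - x‖) + ‖ystar‖ * (c * ‖u - x‖) := by
        rw [hsplit]; exact add_le_add hnormal hlin
    _ = (K * ε + ‖ystar‖ * c + γ) * ‖u - x‖ := by field_simp; ring

end

theorem epsNormal_graph_strict_diff_general {X Y : Type*}
    [NormedAddCommGroup X] [NormedSpace ℝ X]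
    [NormedAddCommGroup Y] [NormedSpace ℝ Y]
    (f : X → Y) (xb : X) (A : X →L[ℝ] Y) (hdiff : HasStrictFDerivAt f A xb)
    (Ω : Set X) :
    ∀ γ > (0 : ℝ), ∃ δ > (0 : ℝ), ∀ ε : ℝ, 0 ≤ ε →
      ∀ x ∈ Ω, ‖x - xb‖ ≤ δ → ‖f x - f xb‖ ≤ δ →
      ∀ (xstar : StrongDual ℝ X) (ystar : StrongDual ℝ Y),
        IsEpsNormalProd {p : X × Y | p.1 ∈ Ω ∧ p.2 = f p.1} (x, f x) ε xstar (-ystar) →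
        IsEpsNormal Ω x ((‖A‖ + 1 + γ) * ε + ‖ystar‖ * γ) (xstar - ystar.comp A) := by
  intro γ hγ
  obtain ⟨s, hs, hf⟩ := hdiff.approximates_deriv_on_nhds (c := ⟨γ, hγ.le⟩) (Or.inr hγ)
  obtain ⟨r, hr, hball⟩ := Metric.mem_nhds_iff.1 hs
  refine ⟨r / 2, half_pos hr, fun ε hε x _ hx _ xstar ystar hN => ?_⟩
  have hxball : x ∈ Metric.ball xb r := by
    rw [Metric.mem_ball, dist_eq_norm]; linarith
  exact hN.isEpsNormal_sub_comp hε (mem_of_superset (Metric.isOpen_ball.mem_nhds hxball) hball) hf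

/-- Lemma on `ε`-normals to graphs of strictly differentiable mappings over a closed set:
if `(x*, −y*) ∈ N̂_ε((x,y); gph f|_Ω)` near `(xb, f xb)`, then
`x* − ∇f(xb)* y* ∈ N̂_{(c+γ)ε + ‖y*‖γ}(x; Ω)` with `c = ‖∇f(xb)‖ + 1`,
where `δ` is independent of `ε`. -/
theorem epsNormal_graph_strict_diff {X Y : Type*}
    [NormedAddCommGroup X] [NormedSpace ℝ X] [CompleteSpace X]
    [NormedAddCommGroup Y] [NormedSpace ℝ Y] [CompleteSpace Y]
    (f : X → Y) (xb : X) (A : X →L[ℝ] Y) (hdiff : HasStrictFDerivAt f A xb)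
    (Ω : Set X) (hΩ : IsClosed Ω) (hxb : xb ∈ Ω) :
    ∀ γ > (0 : ℝ), ∃ δ > (0 : ℝ), ∀ ε : ℝ, 0 ≤ ε →
      ∀ x ∈ Ω, ‖x - xb‖ ≤ δ → ‖f x - f xb‖ ≤ δ →
      ∀ (xstar : StrongDual ℝ X) (ystar : StrongDual ℝ Y),
        IsEpsNormalProd {p : X × Y | p.1 ∈ Ω ∧ p.2 = f p.1} (x, f x) ε xstar (-ystar) →
        IsEpsNormal Ω x ((‖A‖ + 1 + γ) * ε + ‖ystar‖ * γ) (xstar - ystar.comp A) :=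
  epsNormal_graph_strict_diff_general f xb A hdiff Ω
end

section
/- Let S : X ⇉ Y be a set-valued mapping between Banach spaces, Θ ⊆ S(X) ⊆ Y, Ω := S⁻¹(Θ), and (x̄, ȳ) ∈ gph S with x̄ ∈ Ω, ȳ ∈ Θ. If S⁻¹ is Lipschitz-like relative to Θ around (ȳ, x̄), then S|^Θ (defined by S|^Θ(x) = S(x) ∩ Θ) is metrically regular relative to Ω around (x̄, ȳ): there exist neighborhoods V of x̄, W of ȳ and κ ≥ 0 such that d(x', (S|^Θ)⁻¹(y)) ≤ κ d(y, S|^Θ(x')) for all x' ∈ Ω ∩ V and y ∈ Θ ∩ W. -/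
/-!
Take `y' ∈ S x' ∩ Θ`. If `y'` is close to `y`, the Lipschitz-like estimate for the pair
`(y, y')` moves `x'` into `S⁻¹ y` at cost `κ ‖y - y'‖`. If `y'` is far from `y`, the estimate
for `(y, ȳ)` moves `x̄` into `S⁻¹ y` instead; as `x'` is near `x̄`, the cost of reaching `S⁻¹ y`
from `x'` is then a small constant, dominated by `‖y - y'‖`. Either way the cost is at most
`(κ + 1) ‖y - y'‖`, and the infimum over `y'` gives metric regularity.
-/

open Filter Topology

/-- `C` is closed around `p`. -/
def ClosedAround {Z : Type*} [TopologicalSpace Z] (C : Set Z) (p : Z) : Prop :=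
  ∃ U : Set Z, IsClosed U ∧ p ∈ interior U ∧ IsClosed (C ∩ U)

/-- Lipschitz-like property of a multifunction `F : Y ⇉ X` relative to a set `Θ ⊆ Y`
around `(yb, xb)` with constant `κ`. -/
def LipschitzLikeRel {Y X : Type*} [NormedAddCommGroup Y] [NormedSpace ℝ Y]
    [NormedAddCommGroup X] [NormedSpace ℝ X]
    (F : Y → Set X) (Θ : Set Y) (yb : Y) (xb : X) (κ : ℝ) : Prop :=
  ∃ W ∈ 𝓝 yb, ∃ V ∈ 𝓝 xb, ∀ y ∈ Θ ∩ W, ∀ y' ∈ Θ ∩ W, ∀ x ∈ F y' ∩ V,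
    ∃ z ∈ F y, ‖x - z‖ ≤ κ * ‖y' - y‖

open Metric

theorem LipschitzLikeRel.exists_ball {Y X : Type*} [NormedAddCommGroup Y] [NormedSpace ℝ Y]
    [NormedAddCommGroup X] [NormedSpace ℝ X] {F : Y → Set X} {Θ : Set Y} {yb : Y} {xb : X}
    {κ : ℝ} (h : LipschitzLikeRel F Θ yb xb κ) :
    ∃ ρ > 0, ∀ y ∈ Θ ∩ ball yb ρ, ∀ y' ∈ Θ ∩ ball yb ρ, ∀ x ∈ F y' ∩ ball xb ρ,
      ∃ z ∈ F y, dist x z ≤ κ * dist y y' := by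
  obtain ⟨W, hW, V, hV, hLL⟩ := h
  obtain ⟨ρW, hρW, hWball⟩ := Metric.mem_nhds_iff.mp hW
  obtain ⟨ρV, hρV, hVball⟩ := Metric.mem_nhds_iff.mp hV
  refine ⟨min ρW ρV, lt_min hρW hρV, fun y hy y' hy' x hx => ?_⟩
  have inW : ball yb (min ρW ρV) ⊆ W := (ball_subset_ball (min_le_left _ _)).trans hWball
  have inV : ball xb (min ρW ρV) ⊆ V := (ball_subset_ball (min_le_right _ _)).trans hVball
  obtain ⟨z, hz, hxz⟩ :=
    hLL y ⟨hy.1, inW hy.2⟩ y' ⟨hy'.1, inW hy'.2⟩ x ⟨hx.1, inV hx.2⟩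
  exact ⟨z, hz, by rwa [dist_eq_norm, dist_comm, dist_eq_norm]⟩

section PseudoMetric

variable {X Y : Type*} [PseudoMetricSpace X] [PseudoMetricSpace Y]

theorem infEDist_le_ofReal_mul_infEDist {x : X} {C : Set X} {y : Y} {T : Set Y} {K : ℝ}
    (hK : 0 < K) (h : ∀ y' ∈ T, ∃ z ∈ C, dist x z ≤ K * dist y y') :
    infEDist x C ≤ ENNReal.ofReal K * infEDist y T := by
  have hK₀ : ENNReal.ofReal K ≠ 0 := ENNReal.ofReal_pos.mpr hK |>.ne'
  rw [← ENNReal.div_le_iff' hK₀ ENNReal.ofReal_ne_top]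
  refine le_infEDist.mpr fun y' hy' => ?_
  obtain ⟨z, hz, hxz⟩ := h y' hy'
  rw [ENNReal.div_le_iff' hK₀ ENNReal.ofReal_ne_top, edist_dist, ← ENNReal.ofReal_mul hK.le]
  calc infEDist x C ≤ edist x z := infEDist_le_edist_of_mem hz
    _ ≤ ENNReal.ofReal (K * dist y y') := by
      rw [edist_dist]; exact ENNReal.ofReal_le_ofReal hxz

theorem exists_dist_le_of_lipschitzLike {F : Y → Set X} {Θ : Set Y} {yb : Y} {xb : X}
    {κ ρ : ℝ} (hκ : 0 ≤ κ) (hyb : yb ∈ Θ) (hxb : xb ∈ F yb)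
    (hLL : ∀ y ∈ Θ ∩ ball yb ρ, ∀ y' ∈ Θ ∩ ball yb ρ, ∀ x ∈ F y' ∩ ball xb ρ,
      ∃ z ∈ F y, dist x z ≤ κ * dist y y')
    {x : X} (hx : x ∈ ball xb (ρ / 2)) {y : Y} (hy : y ∈ Θ ∩ ball yb (ρ / 2))
    {y' : Y} (hy' : y' ∈ Θ) (hxy' : x ∈ F y') :
    ∃ z ∈ F y, dist x z ≤ (κ + 1) * dist y y' := by
  have hx' : dist x xb < ρ / 2 := hx
  have hyyb : dist y yb < ρ / 2 := hy.2
  have hρ : 0 < ρ := by linarith [dist_nonneg (x := x) (y := xb)]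
  have hy_ball : y ∈ Θ ∩ ball yb ρ := ⟨hy.1, ball_subset_ball (by linarith) hy.2⟩
  rcases lt_or_ge (dist y y') (ρ / 2) with hnear | hfar
  · have hy'_ball : y' ∈ Θ ∩ ball yb ρ :=
      ⟨hy', by rw [mem_ball]; linarith [dist_triangle_left y' yb y]⟩
    obtain ⟨z, hz, hxz⟩ := hLL y hy_ball y' hy'_ball x ⟨hxy', ball_subset_ball (by linarith) hx⟩
    exact ⟨z, hz, hxz.trans (by nlinarith [dist_nonneg (x := y) (y := y')])⟩
  · obtain ⟨z, hz, hxbz⟩ := hLL y hy_ball yb ⟨hyb, mem_ball_self hρ⟩ xb ⟨hxb, mem_ball_self hρ⟩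
    refine ⟨z, hz, ?_⟩
    calc dist x z ≤ dist x xb + dist xb z := dist_triangle _ _ _
      _ ≤ ρ / 2 + κ * (ρ / 2) := by nlinarith
      _ ≤ (κ + 1) * dist y y' := by nlinarith

end PseudoMetric

theorem relative_metric_regularity_general {X Y : Type*}
    [NormedAddCommGroup X] [NormedSpace ℝ X]
    [NormedAddCommGroup Y] [NormedSpace ℝ Y]
    {S : X → Set Y} {Θ : Set Y} {xb : X} {yb : Y}
    (hmem : yb ∈ S xb ∩ Θ)
    (hLip : ∃ κ ≥ (0 : ℝ), LipschitzLikeRel (fun y => {x | y ∈ S x}) Θ yb xb κ) :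
    ∃ κ ≥ (0 : ℝ), ∃ V ∈ 𝓝 xb, ∃ W ∈ 𝓝 yb,
      ∀ x', (S x' ∩ Θ).Nonempty → x' ∈ V → ∀ y ∈ Θ ∩ W,
        EMetric.infEdist x' {x | y ∈ S x ∩ Θ} ≤
          ENNReal.ofReal κ * EMetric.infEdist y (S x' ∩ Θ) := by
  obtain ⟨κ, hκ, hLL⟩ := hLip
  obtain ⟨ρ, hρ, hball⟩ := hLL.exists_ball
  refine ⟨κ + 1, by linarith, ball xb (ρ / 2), ball_mem_nhds _ (half_pos hρ),
    ball yb (ρ / 2), ball_mem_nhds _ (half_pos hρ), fun x' _ hx' y hy => ?_⟩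
  have preimage_eq : {x | y ∈ S x ∩ Θ} = {x | y ∈ S x} := by
    ext x; simp [hy.1]
  rw [preimage_eq]
  exact infEDist_le_ofReal_mul_infEDist (by linarith) fun y' hy' =>
    exists_dist_le_of_lipschitzLike hκ hmem.2 hmem.1 hball hx' hy hy'.2 hy'.1

/-- If `S⁻¹` is Lipschitz-like relative to `Θ` around `(yb, xb)`, then `S|^Θ` is
metrically regular relative to `Ω = S⁻¹(Θ)` around `(xb, yb)`:
`d(x', (S|^Θ)⁻¹(y)) ≤ κ d(y, S|^Θ(x'))` for `x' ∈ Ω ∩ V`, `y ∈ Θ ∩ W`. -/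
theorem relative_metric_regularity {X Y : Type*}
    [NormedAddCommGroup X] [NormedSpace ℝ X] [CompleteSpace X]
    [NormedAddCommGroup Y] [NormedSpace ℝ Y] [CompleteSpace Y]
    {S : X → Set Y} {Θ : Set Y} {xb : X} {yb : Y}
    (hrange : Θ ⊆ ⋃ x, S x) (hΘcl : IsClosed Θ) (hΘconv : Convex ℝ Θ)
    (hmem : yb ∈ S xb ∩ Θ)
    (hcl : ClosedAround {p : X × Y | p.2 ∈ S p.1} (xb, yb))
    (hLip : ∃ κ ≥ (0 : ℝ), LipschitzLikeRel (fun y => {x | y ∈ S x}) Θ yb xb κ) :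
    ∃ κ ≥ (0 : ℝ), ∃ V ∈ 𝓝 xb, ∃ W ∈ 𝓝 yb,
      ∀ x', (S x' ∩ Θ).Nonempty → x' ∈ V → ∀ y ∈ Θ ∩ W,
        EMetric.infEdist x' {x | y ∈ S x ∩ Θ} ≤
          ENNReal.ofReal κ * EMetric.infEdist y (S x' ∩ Θ) :=
  relative_metric_regularity_general hmem hLip
end
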